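/- arXiv:2101.10501 — 4 statements merged into one kernel-verified Lean document; each statement's English description precedes it below -/
import Mathlib

section
/- Every singular point of the Cefalù quartic F(z) = (∑zᵢ²)² - 3∑zᵢ⁴ = 0 (over an algebraically closed field of characteristic ≠ 2,3) has at least one coordinate equal to zero; i.e., if all four partial derivatives of F vanish at a point with all coordinates nonzero, one obtains a contradiction. -/
/-! Writing `S = ∑ zⱼ²`, one has `∂F/∂zᵢ = 4 zᵢ (S - 3 zᵢ²)`, so at a critical point with all
coordinates nonzero `S = 3 zᵢ²` for every `i`. Summing over the four coordinates gives `4 S = 3 S`,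
hence `S = 0` and then `3 zᵢ² = 0`. -/

open MvPolynomial

noncomputable def cefaluQuartic (σ R : Type*) [Fintype σ] [CommRing R] : MvPolynomial σ R :=
  (∑ i, X i ^ 2) ^ 2 - C 3 * ∑ i, X i ^ 4

theorem pderiv_cefaluQuartic {σ R : Type*} [Fintype σ] [DecidableEq σ] [CommRing R] (i : σ) :
    pderiv i (cefaluQuartic σ R) = 4 * X i * (∑ j, X j ^ 2 - 3 * X i ^ 2) := by
  simp only [cefaluQuartic, map_sub, map_sum, pderiv_pow, pderiv_X, Pi.single_apply,
    Derivation.leibniz, smul_eq_mul, pderiv_C, mul_ite, mul_one, mul_zero,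
    Finset.sum_ite_eq', Finset.mem_univ, if_true]
  rw [map_ofNat C 3]
  ring

theorem eval_pderiv_cefaluQuartic {σ R : Type*} [Fintype σ] [CommRing R] (z : σ → R) (i : σ) :
    eval z (pderiv i (cefaluQuartic σ R)) = 4 * z i * (∑ j, z j ^ 2 - 3 * z i ^ 2) := by
  classical
  simp [pderiv_cefaluQuartic]

theorem sum_sq_eq_three_mul_sq_of_eval_pderiv_cefaluQuartic {σ K : Type*} [Fintype σ] [Field K]
    (h2 : (2 : K) ≠ 0) {z : σ → K} {i : σ} (hzi : z i ≠ 0)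
    (h : eval z (pderiv i (cefaluQuartic σ K)) = 0) : ∑ j, z j ^ 2 = 3 * z i ^ 2 := by
  have h4 : (4 : K) ≠ 0 := by simpa [show (4 : K) = 2 * 2 by norm_num] using h2
  rw [eval_pderiv_cefaluQuartic] at h
  simpa [h4, hzi, sub_eq_zero] using h

theorem sum_sq_eq_zero_of_forall_sum_sq_eq_three_mul_sq {ι K : Type*} [Fintype ι] [Field K]
    (hcard : (Fintype.card ι : K) ≠ 3) {z : ι → K} (h : ∀ i, ∑ j, z j ^ 2 = 3 * z i ^ 2) :
    ∑ j, z j ^ 2 = 0 := by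
  have hsum : (Fintype.card ι : K) * ∑ j, z j ^ 2 = 3 * ∑ j, z j ^ 2 := by
    rw [← nsmul_eq_mul, ← Finset.card_univ, ← Finset.sum_const, Finset.mul_sum]
    exact Finset.sum_congr rfl fun i _ => h i
  have : ((Fintype.card ι : K) - 3) * ∑ j, z j ^ 2 = 0 := by linear_combination hsum
  exact (mul_eq_zero.mp this).resolve_left (sub_ne_zero.mpr hcard)

theorem cefalu_singular_points_have_zero_coordinate_general
    (K : Type*) [Field K] (h2 : (2 : K) ≠ 0) (h3 : (3 : K) ≠ 0)
    (F : MvPolynomial (Fin 4) K)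
    (hF : F = (∑ i, (X i) ^ 2) ^ 2 - C 3 * ∑ i, (X i) ^ 4)
    (z : Fin 4 → K) (hz : ∀ i, z i ≠ 0)
    (hsing : ∀ i, eval z (pderiv i F) = 0) :
    False := by
  change F = cefaluQuartic (Fin 4) K at hF
  subst hF
  have hcrit i := sum_sq_eq_three_mul_sq_of_eval_pderiv_cefaluQuartic h2 (hz i) (hsing i)
  have hS : ∑ j, z j ^ 2 = 0 :=
    sum_sq_eq_zero_of_forall_sum_sq_eq_three_mul_sq
      (fun h => one_ne_zero (α := K) (by simp at h; linear_combination h)) hcrit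
  have h0 : 3 * z 0 ^ 2 = 0 := (hcrit 0).symm.trans hS
  exact hz 0 (by simpa [h3] using h0)

/-- Every singular point of the Cefalù quartic
`F = (∑ zᵢ²)² - 3 ∑ zᵢ⁴` (over an algebraically closed field of characteristic ≠ 2,3)
has at least one coordinate equal to zero: if `F` and all four of its partial derivatives
vanish at a point all of whose coordinates are nonzero, we get a contradiction. -/
theorem cefalu_singular_points_have_zero_coordinate
    (K : Type*) [Field K] [IsAlgClosed K] (h2 : (2 : K) ≠ 0) (h3 : (3 : K) ≠ 0)
    (F : MvPolynomial (Fin 4) K)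
    (hF : F = (∑ i, (X i) ^ 2) ^ 2 - C 3 * ∑ i, (X i) ^ 4)
    (z : Fin 4 → K) (hz : ∀ i, z i ≠ 0)
    (hFz : eval z F = 0) (hsing : ∀ i, eval z (pderiv i F) = 0) :
    False :=
  cefalu_singular_points_have_zero_coordinate_general K h2 h3 F hF z hz hsing
end

section
/- Let φ be an endomorphism of a free abelian group sending H ↦ 3H - 4E₂, E₁ ↦ 2H - 3E₂, E₂ ↦ E₁ on a rank-3 free summand with basis H, E₁, E₂ (and identity elsewhere). Then φ has infinite order. -/
/-!
The map `φ` is unipotent with a nontrivial Jordan block: it fixes `u = (2, -2, -2)` and sends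
`w = (1, 0, -2)` to `w + u`. Hence `φ ^ n` sends `w` to `w + n • u`, which differs from `w` for
`n ≥ 1` because `u` has infinite order.
-/

namespace AddMonoid.End

variable {M : Type*} [AddCancelCommMonoid M]

theorem pow_apply_of_apply_eq_add (f : AddMonoid.End M) {u w : M} (hu : f u = u)
    (hw : f w = w + u) (n : ℕ) : (f ^ n) w = w + n • u := by
  induction n with
  | zero => simp
  | succ n ih =>
    rw [coe_pow, Function.iterate_succ_apply', ← coe_pow, ih, map_add, hw, map_nsmul, hu,
      succ_nsmul', add_assoc]

theorem orderOf_eq_zero_of_apply_eq_add (f : AddMonoid.End M) {u w : M} (hu : f u = u)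
    (hw : f w = w + u) (hu_inf : ¬IsOfFinAddOrder u) : orderOf f = 0 := by
  refine orderOf_eq_zero_iff'.mpr fun n hn hfn => hu_inf ?_
  have hnu : w + n • u = w + 0 := by
    rw [← pow_apply_of_apply_eq_add f hu hw n, hfn, coe_one, id_eq, add_zero]
  exact isOfFinAddOrder_iff_nsmul_eq_zero.mpr ⟨n, hn, add_left_cancel hnu⟩

end AddMonoid.End

/-- Let `φ` be an endomorphism of a free abelian group `(Fin 3 → ℤ) × A` which on the rank-3
free summand with basis `H = e₀`, `E₁ = e₁`, `E₂ = e₂` sends `H ↦ 3H - 4E₂`,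
`E₁ ↦ 2H - 3E₂`, `E₂ ↦ E₁`, and is the identity elsewhere. Then `φ` has infinite order. -/
theorem picard_action_infinite_order
    (A : Type*) [AddCommGroup A]
    (φ : AddMonoid.End ((Fin 3 → ℤ) × A))
    (hφ : ∀ (v : Fin 3 → ℤ) (a : A),
      φ (v, a) = (![3 * v 0 + 2 * v 1, v 2, -4 * v 0 - 3 * v 1], a)) :
    ∀ n : ℕ, 1 ≤ n → φ ^ n ≠ 1 := by
  have hu : φ (![2, -2, -2], 0) = (![2, -2, -2], 0) := by
    rw [hφ]; refine Prod.ext (funext fun i => ?_) rfl; fin_cases i <;> rfl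
  have hw : φ (![1, 0, -2], 0) = (![1, 0, -2], 0) + (![2, -2, -2], 0) := by
    rw [hφ]; refine Prod.ext (funext fun i => ?_) (add_zero 0).symm; fin_cases i <;> rfl
  have hu_inf : ¬IsOfFinAddOrder ((![2, -2, -2], 0) : (Fin 3 → ℤ) × A) := fun h =>
    not_isOfFinAddOrder_of_isAddTorsionFree (by simp) h.fst
  intro n hn
  exact orderOf_eq_zero_iff'.mp (φ.orderOf_eq_zero_of_apply_eq_add hu hw hu_inf) n hn
end

section
/- A normal cubic surface in ℙ³ over an algebraically closed field cannot contain three collinear singular points: if F is an irreducible cubic form in 4 variables whose zero set has finite singular locus, then no line contains three singular points of {F = 0}. -/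
/-!
Restrict to the line through `p` and `q`. Each partial derivative of `F` is a quadric vanishing
at the three points `p`, `q`, `r` of this line, hence on all of it; and `F` itself restricts to a
binary cubic with double roots at `p` and `q`, so it vanishes on the line as well. The whole line
then lies in the singular locus, which is impossible for a finite set of points since `K` is
infinite.
-/

open MvPolynomial

namespace MvPolynomial

variable {σ R : Type*} [CommSemiring R]

def IsSingularPoint (F : MvPolynomial σ R) (v : σ → R) : Prop :=
  eval v F = 0 ∧ ∀ i, eval v (pderiv i F) = 0

theorem IsHomogeneous.eval_smul {G : MvPolynomial σ R} {n : ℕ} (hG : G.IsHomogeneous n)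
    (c : R) (v : σ → R) : eval (c • v) G = c ^ n * eval v G := by
  simp only [eval_eq, Finset.mul_sum]
  refine Finset.sum_congr rfl fun d hd => ?_
  simp only [Pi.smul_apply, smul_eq_mul, mul_pow, Finset.prod_mul_distrib,
    Finset.prod_pow_eq_pow_sum, ← hG.degree_eq_sum_deg_support hd]
  ring

theorem IsHomogeneous.isSingularPoint_smul_iff [NoZeroDivisors R] {F : MvPolynomial σ R} {n : ℕ}
    (hF : F.IsHomogeneous n) {c : R} (hc : c ≠ 0) (v : σ → R) :
    F.IsSingularPoint (c • v) ↔ F.IsSingularPoint v := by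
  simp only [IsSingularPoint, hF.eval_smul, hF.pderiv.eval_smul, mul_eq_zero, pow_ne_zero _ hc,
    false_or]

noncomputable def restrictLine (p q : σ → R) : MvPolynomial σ R →ₐ[R] Polynomial R :=
  aeval fun i => Polynomial.C (q i) * Polynomial.X + Polynomial.C (p i)

theorem restrictLine_X (p q : σ → R) (i : σ) :
    restrictLine p q (X i) = Polynomial.C (q i) * Polynomial.X + Polynomial.C (p i) :=
  aeval_X _ _

theorem eval_restrictLine (p q : σ → R) (G : MvPolynomial σ R) (t : R) :
    (restrictLine p q G).eval t = eval (p + t • q) G := by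
  induction G using MvPolynomial.induction_on with
  | C a => simp [restrictLine]
  | add f g hf hg => simp only [map_add, Polynomial.eval_add, hf, hg]
  | mul_X f j hf =>
    rw [map_mul, Polynomial.eval_mul, hf, restrictLine_X, eval_mul, eval_X]
    simp only [Polynomial.eval_add, Polynomial.eval_mul, Polynomial.eval_C, Polynomial.eval_X,
      Pi.add_apply, Pi.smul_apply, smul_eq_mul]
    ring

theorem coeff_zero_restrictLine (p q : σ → R) (G : MvPolynomial σ R) :
    (restrictLine p q G).coeff 0 = eval p G := by
  simp [Polynomial.coeff_zero_eq_eval_zero, eval_restrictLine]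

theorem coeff_one_restrictLine [Fintype σ] (p q : σ → R) (G : MvPolynomial σ R) :
    (restrictLine p q G).coeff 1 = ∑ i, q i * eval p (pderiv i G) := by
  induction G using MvPolynomial.induction_on with
  | C a => simp [restrictLine]
  | add f g hf hg => simp only [map_add, Polynomial.coeff_add, hf, hg, mul_add,
      Finset.sum_add_distrib]
  | mul_X f j hf =>
    classical
    simp only [map_mul, restrictLine_X, mul_add, Polynomial.coeff_add, ← mul_assoc,
      Polynomial.coeff_mul_X, Polynomial.coeff_mul_C, coeff_zero_restrictLine, hf,
      Derivation.leibniz, pderiv_X, Pi.single_apply, smul_eq_mul, map_add, map_mul, eval_X,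
      Finset.sum_add_distrib, apply_ite (eval p), map_zero, mul_ite, mul_one, mul_zero,
      Finset.sum_ite_eq, Finset.mem_univ, if_true]
    rw [mul_comm (eval p f), Finset.sum_mul]
    exact congrArg _ (Finset.sum_congr rfl fun _ _ => mul_right_comm _ _ _)

theorem IsHomogeneous.natDegree_restrictLine_le {G : MvPolynomial σ R} {n : ℕ}
    (hG : G.IsHomogeneous n) (p q : σ → R) : (restrictLine p q G).natDegree ≤ n := by
  rw [G.as_sum, map_sum]
  refine Polynomial.natDegree_sum_le_of_forall_le _ _ fun d hd => ?_
  rw [restrictLine, aeval_monomial, Polynomial.algebraMap_eq, Finsupp.prod,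
    hG.degree_eq_sum_deg_support hd]
  refine Polynomial.natDegree_C_mul_le _ _ |>.trans <| Polynomial.natDegree_prod_le _ _ |>.trans <|
    Finset.sum_le_sum fun i _ => Polynomial.natDegree_pow_le.trans ?_
  exact (Nat.mul_le_mul_left _ Polynomial.natDegree_linear_le).trans (mul_one _).le

section Field

variable {K : Type*} [Field K] [Infinite K]

theorem IsHomogeneous.reflect_restrictLine {G : MvPolynomial σ K} {n : ℕ}
    (hG : G.IsHomogeneous n) (p q : σ → K) :
    (restrictLine p q G).reflect n = restrictLine q p G := by
  refine Polynomial.eq_of_infinite_eval_eq _ _ ((Set.finite_singleton 0).infinite_compl.mono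
    fun t (ht : t ≠ 0) => ?_)
  let := invertibleOfNonzero (inv_ne_zero ht)
  have h := Polynomial.eval₂_reflect_mul_pow (RingHom.id K) t⁻¹ n _
    (hG.natDegree_restrictLine_le p q)
  rw [invOf_eq_inv, inv_inv, Polynomial.eval₂_id, Polynomial.eval₂_id] at h
  have hline : q + t • p = t • (p + t⁻¹ • q) := by
    rw [smul_add, smul_smul, mul_inv_cancel₀ ht, one_smul, add_comm]
  calc _ = (restrictLine p q G).eval t⁻¹ * t ^ n := by
        rw [← h, mul_assoc, ← mul_pow, inv_mul_cancel₀ ht, one_pow, mul_one]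
    _ = (restrictLine q p G).eval t := by
        rw [eval_restrictLine, eval_restrictLine, hline, hG.eval_smul, mul_comm]

theorem IsHomogeneous.coeff_restrictLine_swap {G : MvPolynomial σ K} {n : ℕ}
    (hG : G.IsHomogeneous n) (p q : σ → K) {k : ℕ} (hk : k ≤ n) :
    (restrictLine p q G).coeff k = (restrictLine q p G).coeff (n - k) := by
  rw [← hG.reflect_restrictLine q p, Polynomial.coeff_reflect, Polynomial.revAt_le hk]

-- `q` is the point at infinity of the parametrization: the restriction vanishes at `0`, `u`, `∞`.
theorem IsHomogeneous.restrictLine_eq_zero_of_eval_eq_zero {G : MvPolynomial σ K}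
    (hG : G.IsHomogeneous 2) {p q : σ → K} {u : K} (hp : eval p G = 0) (hq : eval q G = 0)
    (hu : u ≠ 0) (hpuq : eval (p + u • q) G = 0) : restrictLine p q G = 0 := by
  set g := restrictLine p q G
  have hg : g = Polynomial.C (g.coeff 1) * Polynomial.X := by
    ext k
    rw [Polynomial.coeff_C_mul_X]
    rcases lt_or_ge 2 k with hk | hk
    · rw [if_neg (by omega)]
      exact Polynomial.coeff_eq_zero_of_natDegree_lt
        ((hG.natDegree_restrictLine_le p q).trans_lt hk)
    interval_cases k
    · rw [if_neg zero_ne_one, coeff_zero_restrictLine, hp]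
    · rw [if_pos rfl]
    · rw [if_neg (by decide), hG.coeff_restrictLine_swap p q le_rfl, Nat.sub_self,
        coeff_zero_restrictLine, hq]
  have hgu := congrArg (Polynomial.eval u) hg
  rw [eval_restrictLine, hpuq, Polynomial.eval_mul, Polynomial.eval_C, Polynomial.eval_X] at hgu
  rw [hg, (mul_eq_zero.mp hgu.symm).resolve_right hu, map_zero, zero_mul]

-- The restriction has double zeros at `0` (the point `p`) and at `∞` (the point `q`).
theorem IsHomogeneous.restrictLine_eq_zero_of_isSingularPoint [Fintype σ]
    {F : MvPolynomial σ K} (hF : F.IsHomogeneous 3) {p q : σ → K}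
    (hp : F.IsSingularPoint p) (hq : F.IsSingularPoint q) : restrictLine p q F = 0 := by
  have hdir : ∀ {v w : σ → K}, F.IsSingularPoint v → (restrictLine v w F).coeff 1 = 0 :=
    fun hv => by simp [coeff_one_restrictLine, hv.2]
  ext k
  rw [Polynomial.coeff_zero]
  rcases lt_or_ge 3 k with hk | hk
  · exact Polynomial.coeff_eq_zero_of_natDegree_lt
      ((hF.natDegree_restrictLine_le p q).trans_lt hk)
  interval_cases k
  · rw [coeff_zero_restrictLine, hp.1]
  · exact hdir hp
  · rw [hF.coeff_restrictLine_swap p q (by norm_num)]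
    exact hdir hq
  · rw [hF.coeff_restrictLine_swap p q le_rfl, Nat.sub_self, coeff_zero_restrictLine, hq.1]

theorem IsHomogeneous.isSingularPoint_add_smul [Fintype σ] {F : MvPolynomial σ K}
    (hF : F.IsHomogeneous 3) {p q : σ → K} {u : K} (hp : F.IsSingularPoint p)
    (hq : F.IsSingularPoint q) (hu : u ≠ 0) (hpuq : F.IsSingularPoint (p + u • q)) (t : K) :
    F.IsSingularPoint (p + t • q) := by
  refine ⟨?_, fun i => ?_⟩
  · rw [← eval_restrictLine, hF.restrictLine_eq_zero_of_isSingularPoint hp hq,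
      Polynomial.eval_zero]
  · have hquadric : (pderiv i F).IsHomogeneous 2 := hF.pderiv
    rw [← eval_restrictLine, hquadric.restrictLine_eq_zero_of_eval_eq_zero (hp.2 i) (hq.2 i) hu
      (hpuq.2 i), Polynomial.eval_zero]

end Field

end MvPolynomial

namespace LinearIndependent

variable {K V : Type*} [Field K] [AddCommGroup V] [Module K V] {p q : V}

theorem add_smul_ne_zero (h : LinearIndependent K ![p, q]) (t : K) : p + t • q ≠ 0 := fun h0 =>
  one_ne_zero (pair_iff.mp h 1 t (by rwa [one_smul])).1

theorem eq_of_add_smul_eq_smul_add_smul (h : LinearIndependent K ![p, q]) {t t' c : K}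
    (htc : p + t • q = c • (p + t' • q)) : t = t' := by
  obtain ⟨hc, ht⟩ :=
    pair_iff.mp h (1 - c) (t - c * t') (by linear_combination (norm := module) htc)
  rw [sub_eq_zero] at hc ht
  rw [ht, ← hc, one_mul]

theorem exists_add_smul_ne_smul [Infinite K] (h : LinearIndependent K ![p, q]) (S : Finset V) :
    ∃ t : K, ∀ w ∈ S, ∀ c : K, p + t • q ≠ c • w := by
  by_contra! hS
  choose w hw c hc using hS
  obtain ⟨t, t', hne, heq⟩ := Finite.exists_ne_map_eq_of_infinite fun t => (⟨w t, hw t⟩ : S)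
  have hc' : c t' ≠ 0 := fun h0 => h.add_smul_ne_zero t' (by rw [hc t', h0, zero_smul])
  refine hne (h.eq_of_add_smul_eq_smul_add_smul (c := c t / c t') ?_)
  rw [hc t, hc t', smul_smul, div_mul_cancel₀ _ hc', Subtype.mk.inj heq]

end LinearIndependent

theorem normal_cubic_no_three_collinear_singular_points_general
    (K : Type*) [Field K] [IsAlgClosed K]
    (F : MvPolynomial (Fin 4) K) (hhom : F.IsHomogeneous 3)
    -- the singular locus is finite (as a set of points of ℙ³):
    (hnormal : ∃ S : Finset (Fin 4 → K),
      ∀ v : Fin 4 → K, v ≠ 0 → eval v F = 0 → (∀ i, eval v (pderiv i F) = 0) →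
        ∃ w ∈ S, ∃ c : K, v = c • w)
    -- three singular points:
    (p q r : Fin 4 → K) (hp0 : p ≠ 0)
    (hp : eval p F = 0 ∧ ∀ i, eval p (pderiv i F) = 0)
    (hq : eval q F = 0 ∧ ∀ i, eval q (pderiv i F) = 0)
    (hr : eval r F = 0 ∧ ∀ i, eval r (pderiv i F) = 0)
    -- pairwise distinct as points of ℙ³:
    (hpq : ¬ ∃ c : K, q = c • p) (hpr : ¬ ∃ c : K, r = c • p) (hqr : ¬ ∃ c : K, r = c • q)
    -- collinear:
    (hcol : ∃ a b : K, r = a • p + b • q) :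
    False := by
  obtain ⟨S, hS⟩ := hnormal
  obtain ⟨a, b, rfl⟩ := hcol
  have hind : LinearIndependent K ![p, q] :=
    (LinearIndependent.pair_iff' hp0).mpr fun c h => hpq ⟨c, h.symm⟩
  have ha : a ≠ 0 := by
    rintro rfl
    exact hqr ⟨b, by rw [zero_smul, zero_add]⟩
  have hb : b ≠ 0 := by
    rintro rfl
    exact hpr ⟨a, by rw [zero_smul, add_zero]⟩
  have hr' : F.IsSingularPoint (p + (b / a) • q) := by
    rwa [← hhom.isSingularPoint_smul_iff ha, smul_add, smul_smul, mul_div_cancel₀ _ ha]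
  have hline := hhom.isSingularPoint_add_smul hp hq (div_ne_zero hb ha) hr'
  obtain ⟨t, ht⟩ := hind.exists_add_smul_ne_smul S
  obtain ⟨w, hw, c, hc⟩ := hS _ (hind.add_smul_ne_zero t) (hline t).1 (hline t).2
  exact ht w hw c hc

/-- A normal cubic surface in `ℙ³` over an algebraically closed field cannot contain three
collinear singular points. Here `F` is an irreducible homogeneous cubic form in 4 variables;
normality is expressed by the finiteness of the set of singular points of `{F = 0}` up to
scalars; and we show that no three distinct singular points of `{F = 0}` are collinear. -/
theorem normal_cubic_no_three_collinear_singular_points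
    (K : Type*) [Field K] [IsAlgClosed K]
    (F : MvPolynomial (Fin 4) K) (hhom : F.IsHomogeneous 3) (hirr : Irreducible F)
    -- the singular locus is finite (as a set of points of ℙ³):
    (hnormal : ∃ S : Finset (Fin 4 → K),
      ∀ v : Fin 4 → K, v ≠ 0 → eval v F = 0 → (∀ i, eval v (pderiv i F) = 0) →
        ∃ w ∈ S, ∃ c : K, v = c • w)
    -- three singular points:
    (p q r : Fin 4 → K) (hp0 : p ≠ 0) (hq0 : q ≠ 0) (hr0 : r ≠ 0)
    (hp : eval p F = 0 ∧ ∀ i, eval p (pderiv i F) = 0)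
    (hq : eval q F = 0 ∧ ∀ i, eval q (pderiv i F) = 0)
    (hr : eval r F = 0 ∧ ∀ i, eval r (pderiv i F) = 0)
    -- pairwise distinct as points of ℙ³:
    (hpq : ¬ ∃ c : K, q = c • p) (hpr : ¬ ∃ c : K, r = c • p) (hqr : ¬ ∃ c : K, r = c • q)
    -- collinear:
    (hcol : ∃ a b : K, r = a • p + b • q) :
    False :=
  normal_cubic_no_three_collinear_singular_points_general K F hhom hnormal p q r hp0 hp hq hr hpq
    hpr hqr hcol
end

section
/- In the Kummer–Enriques graph Γ, the maximal number of pairwise non-adjacent vertices is 4: there exists an independent set of size 4 (e.g. {[1,1,1,0],[1,1,0,1],[1,0,1,1],[0,1,1,1]}), and every independent set has size ≤ 4. -/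
/-!
The sixteen vertices split into four frames of four mutually orthogonal vectors, such as
`(0,1,1,1), (1,0,1,-1), (1,-1,0,1), (1,1,-1,0)`, so the graph is covered by four cliques and an
independent set meets each of them in at most one vertex. The four vertices with entries in
`{0, 1}` have pairwise dot products `2` or `3` and attain the bound.
-/

/-- The 16 vertices of the Kummer–Enriques graph: the orbit of `[0,1,1,1]` in `ℙ³(ℚ)` under
double transpositions and even sign changes, listed by canonical representatives (first
nonzero coordinate equal to `1`). Edges join orthogonal vectors. -/
def kummerEnriquesVertices : Finset (Fin 4 → ℚ) :=
  ([![0,1,1,1], ![0,1,1,-1], ![0,1,-1,1], ![0,1,-1,-1],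
    ![1,0,1,1], ![1,0,1,-1], ![1,0,-1,1], ![1,0,-1,-1],
    ![1,1,0,1], ![1,1,0,-1], ![1,-1,0,1], ![1,-1,0,-1],
    ![1,1,1,0], ![1,1,-1,0], ![1,-1,1,0], ![1,-1,-1,0]] : List (Fin 4 → ℚ)).toFinset

open Matrix

theorem Finset.card_le_of_forall_mem_clique {α ι : Type*} [Fintype ι] {r : α → α → Prop}
    {S : Finset α} (C : ι → Set α) (hC : ∀ i, (C i).Pairwise r)
    (hcover : ∀ v ∈ S, ∃ i, v ∈ C i) (hS : ∀ v ∈ S, ∀ w ∈ S, ¬ r v w) :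
    S.card ≤ Fintype.card ι := by
  refine Finset.card_le_card_of_forall_subsingleton (fun v i => v ∈ C i)
    (fun v hv => by simpa using hcover v hv) fun i _ v hv w hw => ?_
  by_contra hvw
  exact hS v hv.1 w hw.1 (hC i hv.2 hw.2 hvw)

def kummerEnriquesFrame : Fin 4 → Finset (Fin 4 → ℚ) :=
  ![{![0,1,1,1], ![1,0,1,-1], ![1,-1,0,1], ![1,1,-1,0]},
    {![0,1,1,-1], ![1,0,-1,-1], ![1,1,0,1], ![1,-1,1,0]},
    {![0,1,-1,1], ![1,0,1,1], ![1,1,0,-1], ![1,-1,-1,0]},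
    {![0,1,-1,-1], ![1,0,-1,1], ![1,-1,0,-1], ![1,1,1,0]}]

theorem pairwise_dotProduct_eq_zero_kummerEnriquesFrame (i : Fin 4) :
    (kummerEnriquesFrame i : Set (Fin 4 → ℚ)).Pairwise (fun v w => v ⬝ᵥ w = 0) := by
  fin_cases i <;> simp [kummerEnriquesFrame, Set.pairwise_insert, dotProduct, Fin.sum_univ_four]

theorem exists_mem_kummerEnriquesFrame :
    ∀ v ∈ kummerEnriquesVertices, ∃ i, v ∈ kummerEnriquesFrame i := by
  decide

def kummerEnriquesNonnegVertices : Finset (Fin 4 → ℚ) :=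
  ([![1,1,1,0], ![1,1,0,1], ![1,0,1,1], ![0,1,1,1]] : List (Fin 4 → ℚ)).toFinset

theorem kummerEnriquesNonnegVertices_subset :
    kummerEnriquesNonnegVertices ⊆ kummerEnriquesVertices := by
  decide

theorem card_kummerEnriquesNonnegVertices : kummerEnriquesNonnegVertices.card = 4 := by
  decide

theorem dotProduct_ne_zero_of_mem_kummerEnriquesNonnegVertices :
    ∀ v ∈ kummerEnriquesNonnegVertices, ∀ w ∈ kummerEnriquesNonnegVertices, v ⬝ᵥ w ≠ 0 := by
  simp only [kummerEnriquesNonnegVertices, List.mem_toFinset, List.mem_cons, List.not_mem_nil,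
    or_false]
  rintro v (rfl | rfl | rfl | rfl) w (rfl | rfl | rfl | rfl) <;>
    simp [dotProduct, Fin.sum_univ_four] <;> norm_num

/-- In the Kummer–Enriques graph, the maximal number of pairwise non-adjacent vertices is 4:
the set `{[1,1,1,0],[1,1,0,1],[1,0,1,1],[0,1,1,1]}` is an independent set of size 4, and
every independent set has at most 4 elements. -/
theorem kummerEnriquesGraph_independence_number_four :
    (∃ S : Finset (Fin 4 → ℚ), S ⊆ kummerEnriquesVertices ∧ S.card = 4 ∧
      S = ([![1,1,1,0], ![1,1,0,1], ![1,0,1,1], ![0,1,1,1]] : List (Fin 4 → ℚ)).toFinset ∧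
      ∀ v ∈ S, ∀ w ∈ S, (∑ i, v i * w i) ≠ 0) ∧
    ∀ S : Finset (Fin 4 → ℚ), S ⊆ kummerEnriquesVertices →
      (∀ v ∈ S, ∀ w ∈ S, (∑ i, v i * w i) ≠ 0) → S.card ≤ 4 := by
  refine ⟨⟨kummerEnriquesNonnegVertices, kummerEnriquesNonnegVertices_subset,
    card_kummerEnriquesNonnegVertices, rfl,
    dotProduct_ne_zero_of_mem_kummerEnriquesNonnegVertices⟩, fun S hSV hS => ?_⟩
  simpa using Finset.card_le_of_forall_mem_clique (fun i => (kummerEnriquesFrame i : Set _))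
    pairwise_dotProduct_eq_zero_kummerEnriquesFrame
    (fun v hv => exists_mem_kummerEnriquesFrame v (hSV hv)) hS
end
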